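/- Chi-square fluctuation contraction for channels (trace identity): Let W be a channel from [k] (k even) to finite Y with Σ_x W(y|x) > 0 for all y, let u be uniform on [k], and let p_z, z ∈ {−1,1}^{k/2}, be the Paninski family with parameter ε. Then E_Z[χ²(W∘p_Z ‖ W∘u)] = (4ε²/k)·trace(H(W)), where Z is uniform on {−1,1}^{k/2} and W∘p(y) = Σ_x p(x) W(y|x). -/

import Mathlib

/-!
Write `W∘p_z − W∘u = (ε/m) Σᵢ zᵢ Dᵢ` with `Dᵢ = W(·|2i−1) − W(·|2i)`. Averaging its square over
uniform signs `z` kills the cross terms, since `E[zᵢ zⱼ] = δᵢⱼ`; what is left is `(ε/m)² Σᵢ Dᵢ²`,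
and dividing by `W∘u = (Σₓ W(·|x)) / 2m` and summing over `y` gives the trace of `H(W)`.
-/

/-- The real ±1 value encoded by a boolean. -/
noncomputable def sgn (b : Bool) : ℝ := if b then 1 else -1

/-- The Paninski perturbed family on `[k]` with `k = 2m`. -/
noncomputable def paninski (m : ℕ) (ε : ℝ) (z : Fin m → ℝ) : Fin m × Bool → ℝ :=
  fun x => (1 + (if x.2 then -1 else 1) * 2 * ε * z x.1) / (2 * m)

/-- The matrix `H(W)` associated to a channel `W` from `[k]` (with `k = 2m`). -/
noncomputable def Hmat {Y : Type*} [Fintype Y] (m : ℕ) (W : Fin m × Bool → Y → ℝ) :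
    Matrix (Fin m) (Fin m) ℝ :=
  Matrix.of fun i₁ i₂ => ∑ y,
    (W (i₁, false) y - W (i₁, true) y) * (W (i₂, false) y - W (i₂, true) y) / ∑ x, W x y

open Finset

lemma sgn_not (b : Bool) : sgn (!b) = -sgn b := by cases b <;> simp [sgn]

lemma sgn_mul_self (b : Bool) : sgn b * sgn b = 1 := by cases b <;> norm_num [sgn]

section Rademacher

variable {ι : Type*} [Fintype ι] [DecidableEq ι]

lemma sum_sgn_mul_sgn_of_ne {i j : ι} (hij : i ≠ j) :
    ∑ s : ι → Bool, sgn (s i) * sgn (s j) = 0 := by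
  have flip_involutive : Function.Involutive fun s : ι → Bool => Function.update s i (!s i) :=
    fun s => by simp
  have flip_neg (s : ι → Bool) :
      sgn (Function.update s i (!s i) i) * sgn (Function.update s i (!s i) j)
        = -(sgn (s i) * sgn (s j)) := by
    rw [Function.update_self, Function.update_of_ne hij.symm, sgn_not, neg_mul]
  refine self_eq_neg.mp ((Equiv.sum_comp flip_involutive.toPerm _).symm.trans ?_)
  rw [← sum_neg_distrib]
  exact sum_congr rfl fun s _ => flip_neg s

lemma sum_sgn_mul_sgn (i j : ι) :
    ∑ s : ι → Bool, sgn (s i) * sgn (s j) = if i = j then (2 : ℝ) ^ Fintype.card ι else 0 := by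
  split_ifs with hij
  · simp [hij, sgn_mul_self, Fintype.card_pi]
  · exact sum_sgn_mul_sgn_of_ne hij

lemma sum_sq_sum_sgn_mul (a : ι → ℝ) :
    ∑ s : ι → Bool, (∑ i, sgn (s i) * a i) ^ 2 = 2 ^ Fintype.card ι * ∑ i, a i ^ 2 := by
  have expand (s : ι → Bool) :
      (∑ i, sgn (s i) * a i) ^ 2 = ∑ i, ∑ j, sgn (s i) * sgn (s j) * (a i * a j) := by
    rw [sq, sum_mul_sum]
    exact sum_congr rfl fun i _ => sum_congr rfl fun j _ => by ring
  simp only [expand]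
  rw [sum_comm]
  simp only [sum_comm (s := univ (α := ι → Bool)), ← sum_mul, sum_sgn_mul_sgn, ite_mul, zero_mul,
    sum_ite_eq, mem_univ, if_true, mul_sum, sq]

end Rademacher

lemma sum_paninski_mul_sub_uniform (m : ℕ) (ε : ℝ) (z : Fin m → ℝ) (w : Fin m × Bool → ℝ) :
    ∑ x, paninski m ε z x * w x - ∑ x, 1 / (2 * m : ℝ) * w x
      = ε / m * ∑ i, z i * (w (i, false) - w (i, true)) := by
  rw [← sum_sub_distrib, Fintype.sum_prod_type, mul_sum]
  refine sum_congr rfl fun i _ => ?_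
  simp only [Fintype.sum_bool, paninski, if_true, if_false, Bool.false_eq_true]
  ring

lemma chiSq_paninski {Y : Type*} [Fintype Y] (m : ℕ) (hm : m ≠ 0) (ε : ℝ) (z : Fin m → ℝ)
    (W : Fin m × Bool → Y → ℝ) :
    ∑ y, (∑ x, paninski m ε z x * W x y - ∑ x, 1 / (2 * m : ℝ) * W x y) ^ 2
        / ∑ x, 1 / (2 * m : ℝ) * W x y
      = 2 * ε ^ 2 / m * ∑ y, (∑ i, z i * (W (i, false) y - W (i, true) y)) ^ 2 / ∑ x, W x y := by
  have hm' : (m : ℝ) ≠ 0 := Nat.cast_ne_zero.mpr hm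
  rw [mul_sum]
  refine sum_congr rfl fun y _ => ?_
  rw [sum_paninski_mul_sub_uniform, ← mul_sum]
  field_simp

lemma trace_Hmat {Y : Type*} [Fintype Y] (m : ℕ) (W : Fin m × Bool → Y → ℝ) :
    (Hmat m W).trace = ∑ y, (∑ i, (W (i, false) y - W (i, true) y) ^ 2) / ∑ x, W x y := by
  simp only [Matrix.trace, Matrix.diag, Hmat, Matrix.of_apply, sq, sum_div]
  exact sum_comm

theorem chiSq_fluctuation_trace_general (m : ℕ) (hm : 0 < m) (ε : ℝ)
    {Y : Type*} [Fintype Y] (W : Fin m × Bool → Y → ℝ) :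
    (∑ s : Fin m → Bool,
        ∑ y, ((∑ x, paninski m ε (fun i => sgn (s i)) x * W x y)
              - ∑ x, (1 / (2 * m : ℝ)) * W x y) ^ 2
            / ∑ x, (1 / (2 * m : ℝ)) * W x y) / 2 ^ m
      = (4 * ε ^ 2 / (2 * m)) * Matrix.trace (Hmat m W) := by
  rw [sum_congr rfl fun s _ => chiSq_paninski m hm.ne' ε _ W, ← mul_sum, sum_comm]
  simp only [← sum_div, sum_sq_sum_sgn_mul, Fintype.card_fin, trace_Hmat]
  simp only [mul_div_assoc, ← mul_sum]
  field_simp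
  ring

/-- Chi-square fluctuation contraction:
`E_Z[χ²(W∘p_Z ‖ W∘u)] = (4ε²/k) · trace(H(W))` for `Z` uniform on `{−1,1}^{k/2}`. -/
theorem chiSq_fluctuation_trace (m : ℕ) (hm : 0 < m) (ε : ℝ)
    (hε0 : 0 < ε) (hε : ε < 1 / 2)
    {Y : Type*} [Fintype Y] (W : Fin m × Bool → Y → ℝ)
    (hW0 : ∀ x y, 0 ≤ W x y) (hW1 : ∀ x, ∑ y, W x y = 1)
    (hWy : ∀ y, 0 < ∑ x, W x y) :
    (∑ s : Fin m → Bool,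
        ∑ y, ((∑ x, paninski m ε (fun i => sgn (s i)) x * W x y)
              - ∑ x, (1 / (2 * m : ℝ)) * W x y) ^ 2
            / ∑ x, (1 / (2 * m : ℝ)) * W x y) / 2 ^ m
      = (4 * ε ^ 2 / (2 * m)) * Matrix.trace (Hmat m W) :=
  chiSq_fluctuation_trace_general m hm ε W
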